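/- Given any d-dimensional copula C and any univariate CDFs F₁,…,F_d, the function F(x₁,…,x_d) := C(F₁(x₁),…,F_d(x_d)) is a valid d-dimensional CDF whose marginals are F₁,…,F_d. -/

import Mathlib

open MeasureTheory

/-- The uniform distribution on `[0,1]`. -/
noncomputable def stdUniform : Measure ℝ := volume.restrict (Set.Icc 0 1)

/-- `C : ℝ^d → ℝ` is a (d-dimensional) copula if it is the joint CDF of some
probability measure on `[0,1]^d` all of whose one-dimensional marginals are
uniform on `[0,1]`. -/
def IsCopula (d : ℕ) (C : (Fin d → ℝ) → ℝ) : Prop :=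
  ∃ μ : Measure (Fin d → ℝ), IsProbabilityMeasure μ ∧
    (∀ i : Fin d, Measure.map (fun y => y i) μ = stdUniform) ∧
    (∀ x : Fin d → ℝ, C x = (μ {y | ∀ i, y i ≤ x i}).toReal)

/-- `F : ℝ → ℝ` is a univariate CDF if it is the CDF of some probability
measure on `ℝ`. -/
def IsCDF (F : ℝ → ℝ) : Prop :=
  ∃ ν : Measure ℝ, IsProbabilityMeasure ν ∧ ∀ t, F t = (ν (Set.Iic t)).toReal

/-! Let `U` have the copula law and let `Qᵢ` be the quantile function of `Fᵢ`. For `p ∈ (0,1)`,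
right-continuity of `Fᵢ` gives `Qᵢ p ≤ x ↔ p ≤ Fᵢ x`, and each `Uᵢ` lies in `(0,1)` almost surely.
Hence `X := (Qᵢ (Uᵢ))ᵢ` satisfies `P(X ≤ x) = P(Uᵢ ≤ Fᵢ xᵢ for all i) = C (F x)`, and `Qᵢ (Uᵢ)`
has CDF `Fᵢ` since `Uᵢ` is uniform. -/

open ProbabilityTheory Set Filter Topology

namespace StieltjesFunction

-- `sInf` gives the junk value `0` unless `f x < p ≤ f y` for some `x`, `y`.
noncomputable def quantile (f : StieltjesFunction ℝ) (p : ℝ) : ℝ := sInf {x | p ≤ f x}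

variable {f : StieltjesFunction ℝ} {p : ℝ}

lemma bddBelow_setOf_le_apply (hlo : ∃ x, f x < p) : BddBelow {x | p ≤ f x} := by
  obtain ⟨y, hy⟩ := hlo
  exact ⟨y, fun z hz => le_of_not_gt fun hzy => (hz.trans (f.mono hzy.le)).not_gt hy⟩

lemma le_apply_quantile (hhi : ∃ x, p ≤ f x) : p ≤ f (f.quantile p) := by
  have hcont : Tendsto f (𝓝[>] f.quantile p) (𝓝 (f (f.quantile p))) :=
    (f.right_continuous _).mono Ioi_subset_Ici_self
  refine ge_of_tendsto hcont (eventually_nhdsWithin_of_forall fun y hy => ?_)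
  obtain ⟨s, hs, hsy⟩ := exists_lt_of_csInf_lt hhi hy
  exact le_trans hs (f.mono hsy.le)

lemma quantile_le_iff (hlo : ∃ x, f x < p) (hhi : ∃ x, p ≤ f x) {x : ℝ} :
    f.quantile p ≤ x ↔ p ≤ f x :=
  ⟨fun h => (le_apply_quantile hhi).trans (f.mono h),
    fun h => csInf_le (bddBelow_setOf_le_apply hlo) h⟩

lemma monotoneOn_quantile : MonotoneOn f.quantile {p | (∃ x, f x < p) ∧ ∃ x, p ≤ f x} := by
  intro p hp q hq hpq
  exact (quantile_le_iff hp.1 hp.2).2 <| hpq.trans <| le_apply_quantile hq.2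

end StieltjesFunction

lemma stdUniform_eq_restrict_Ioo : stdUniform = volume.restrict (Ioo 0 1) :=
  (Measure.restrict_congr_set Ioo_ae_eq_Icc).symm

instance isProbabilityMeasure_stdUniform : IsProbabilityMeasure stdUniform :=
  ⟨by rw [stdUniform, Measure.restrict_apply_univ, Real.volume_Icc]; norm_num⟩

lemma ae_mem_Ioo_stdUniform : ∀ᵐ p ∂stdUniform, p ∈ Ioo (0 : ℝ) 1 := by
  rw [stdUniform_eq_restrict_Ioo]
  exact ae_restrict_mem measurableSet_Ioo

lemma stdUniform_Iic {c : ℝ} (hc : c ≤ 1) :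
    stdUniform (Iic c) = ENNReal.ofReal c := by
  rw [stdUniform, Measure.restrict_apply measurableSet_Iic, inter_comm, ← Ici_inter_Iic,
    inter_assoc, Iic_inter_Iic, min_eq_right hc, Ici_inter_Iic, Real.volume_Icc, sub_zero]

namespace ProbabilityTheory

variable {ν : Measure ℝ}

lemma exists_cdf_lt_and_le_cdf {p : ℝ} (hp : p ∈ Ioo 0 1) :
    (∃ x, cdf ν x < p) ∧ ∃ x, p ≤ cdf ν x :=
  ⟨((tendsto_cdf_atBot ν).eventually (eventually_lt_nhds hp.1)).exists,
    (((tendsto_cdf_atTop ν).eventually (eventually_gt_nhds hp.2)).exists).imp fun _ => le_of_lt⟩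

lemma quantile_cdf_le_iff {p x : ℝ} (hp : p ∈ Ioo 0 1) : (cdf ν).quantile p ≤ x ↔ p ≤ cdf ν x :=
  StieltjesFunction.quantile_le_iff (exists_cdf_lt_and_le_cdf hp).1 (exists_cdf_lt_and_le_cdf hp).2

lemma monotoneOn_quantile_cdf : MonotoneOn (cdf ν).quantile (Ioo 0 1) :=
  StieltjesFunction.monotoneOn_quantile.mono fun _ => exists_cdf_lt_and_le_cdf

lemma aemeasurable_quantile_cdf : AEMeasurable (cdf ν).quantile stdUniform := by
  rw [stdUniform_eq_restrict_Ioo]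
  exact aemeasurable_restrict_of_monotoneOn measurableSet_Ioo monotoneOn_quantile_cdf

lemma map_quantile_cdf_stdUniform [IsProbabilityMeasure ν] :
    stdUniform.map (cdf ν).quantile = ν := by
  have hQ := aemeasurable_quantile_cdf (ν := ν)
  have := Measure.isProbabilityMeasure_map hQ
  refine Measure.ext_of_Iic _ _ fun t => ?_
  have hpre : (cdf ν).quantile ⁻¹' Iic t =ᵐ[stdUniform] Iic (cdf ν t) := by
    filter_upwards [ae_mem_Ioo_stdUniform] with p hp
    exact propext (quantile_cdf_le_iff hp)
  rw [Measure.map_apply_of_aemeasurable hQ measurableSet_Iic, measure_congr hpre,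
    stdUniform_Iic (cdf_le_one ν t), ofReal_cdf]

section QuantileTransform

variable {ι : Type*} [Countable ι] {μ : Measure (ι → ℝ)}

noncomputable def quantileTransform (ν : ι → Measure ℝ) (u : ι → ℝ) : ι → ℝ :=
  fun i => (cdf (ν i)).quantile (u i)

lemma ae_forall_mem_Ioo (hμ : ∀ i, μ.map (fun u => u i) = stdUniform) :
    ∀ᵐ u ∂μ, ∀ i, u i ∈ Ioo (0 : ℝ) 1 :=
  ae_all_iff.2 fun i => ae_of_ae_map (measurable_pi_apply i).aemeasurable <|
    (hμ i).symm ▸ ae_mem_Ioo_stdUniform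

lemma aemeasurable_quantileTransform (ν : ι → Measure ℝ)
    (hμ : ∀ i, μ.map (fun u => u i) = stdUniform) : AEMeasurable (quantileTransform ν) μ :=
  aemeasurable_pi_lambda _ fun i => ((hμ i).symm ▸ aemeasurable_quantile_cdf).comp_aemeasurable
    (measurable_pi_apply i).aemeasurable

lemma map_quantileTransform_eval (ν : ι → Measure ℝ) [∀ i, IsProbabilityMeasure (ν i)]
    (hμ : ∀ i, μ.map (fun u => u i) = stdUniform) (i : ι) :
    (μ.map (quantileTransform ν)).map (fun y => y i) = ν i := by
  have hi : AEMeasurable (cdf (ν i)).quantile (μ.map fun u => u i) :=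
    (hμ i).symm ▸ aemeasurable_quantile_cdf
  calc (μ.map (quantileTransform ν)).map (fun y => y i)
      = μ.map ((cdf (ν i)).quantile ∘ fun u => u i) :=
        AEMeasurable.map_map_of_aemeasurable (measurable_pi_apply i).aemeasurable
          (aemeasurable_quantileTransform ν hμ)
    _ = (μ.map fun u => u i).map (cdf (ν i)).quantile :=
        (AEMeasurable.map_map_of_aemeasurable hi (measurable_pi_apply i).aemeasurable).symm
    _ = ν i := by rw [hμ i, map_quantile_cdf_stdUniform]

lemma map_quantileTransform_Iic (ν : ι → Measure ℝ)
    (hμ : ∀ i, μ.map (fun u => u i) = stdUniform) (x : ι → ℝ) :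
    μ.map (quantileTransform ν) (Iic x) = μ (Iic fun i => cdf (ν i) (x i)) := by
  have hpre : quantileTransform ν ⁻¹' Iic x =ᵐ[μ] Iic fun i => cdf (ν i) (x i) := by
    filter_upwards [ae_forall_mem_Ioo hμ] with u hu
    exact propext (forall_congr' fun i => quantile_cdf_le_iff (hu i))
  rw [Measure.map_apply_of_aemeasurable (aemeasurable_quantileTransform ν hμ) measurableSet_Iic,
    measure_congr hpre]

end QuantileTransform

end ProbabilityTheory

lemma IsCDF.exists_eq_cdf {F : ℝ → ℝ} (hF : IsCDF F) :
    ∃ ν : Measure ℝ, IsProbabilityMeasure ν ∧ F = cdf ν := by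
  obtain ⟨ν, hν, hFν⟩ := hF
  exact ⟨ν, hν, funext fun t => by rw [hFν, cdf_eq_real, measureReal_def]⟩

/-- **Converse of Sklar's theorem.** Given a `d`-dimensional copula `C` and
univariate CDFs `F 0, …, F (d-1)`, the function
`x ↦ C (F 0 (x 0), …, F (d-1) (x (d-1)))` is a valid `d`-dimensional joint CDF
(i.e. the CDF of a probability measure on `ℝ^d`) whose marginals are the `F i`. -/
theorem sklar_converse
    (d : ℕ) (C : (Fin d → ℝ) → ℝ) (hC : IsCopula d C)
    (F : Fin d → ℝ → ℝ) (hF : ∀ i, IsCDF (F i)) :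
    ∃ μ : Measure (Fin d → ℝ), IsProbabilityMeasure μ ∧
      (∀ x : Fin d → ℝ,
        C (fun i => F i (x i)) = (μ {y | ∀ i, y i ≤ x i}).toReal) ∧
      (∀ i : Fin d, ∀ t : ℝ,
        ((Measure.map (fun y => y i) μ) (Set.Iic t)).toReal = F i t) := by
  obtain ⟨μ, hμ, hμ_marg, hCμ⟩ := hC
  choose ν hν hFν using fun i => (hF i).exists_eq_cdf
  refine ⟨μ.map (quantileTransform ν),
    Measure.isProbabilityMeasure_map (aemeasurable_quantileTransform ν hμ_marg),
    fun x => ?_, fun i t => ?_⟩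
  · simp only [hFν, hCμ]
    exact congrArg ENNReal.toReal (map_quantileTransform_Iic ν hμ_marg x).symm
  · rw [hFν, map_quantileTransform_eval ν hμ_marg, cdf_eq_real, measureReal_def]
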